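/- arXiv:1505.05793 — 6 statements merged into one kernel-verified Lean document; each statement's English description precedes it below -/
import Mathlib

section
/- Let (X,d) and (Y,d') be metric spaces, f : X → Y Lipschitz, S ⊆ X, and x ∈ S. If limsup_{X ∋ y → x} d'(f(y),f(x))/d(y,x) > limsup_{S ∋ y → x} d'(f(y),f(x))/d(y,x), then x is a porosity point of S; that is, there exist η > 0 and a sequence yₙ → x with yₙ ≠ x such that S ∩ B(yₙ, η d(x,yₙ)) = ∅ for all n. -/
/-!
Near `x`, the difference quotient `d(f z, f x) / d(z, x)` stays below some `c` on `S`, but exceeds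
some `c' > c` at points `y` arbitrarily close to `x`. If a point `z ∈ S` lay within `η d(x, y)` of
such a `y`, the Lipschitz bound along `y ↦ z` would give
`d(f y, f x) ≤ (c + η (L + c)) d(y, x) < c' d(y, x)` once `η` is small, a contradiction.
-/

open Metric Filter Set Topology

def IsPorousAt {X : Type*} [PseudoMetricSpace X] (S : Set X) (x : X) : Prop :=
  ∃ η > (0 : ℝ), ∃ y : ℕ → X, Tendsto y atTop (𝓝 x) ∧ (∀ n, y n ≠ x) ∧
    ∀ n, S ∩ ball (y n) (η * dist x (y n)) = ∅

theorem Real.limsup_nonneg {α : Type*} {l : Filter α} {u : α → ℝ} (hu : ∀ a, 0 ≤ u a) :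
    0 ≤ limsup u l := by
  rcases l.eq_or_neBot with rfl | hl
  -- `limsup u ⊥ = sInf univ`, which is `0` in `ℝ`
  · simp [limsup, limsSup]
  · exact Real.sInf_nonneg fun b hb ↦
      let ⟨a, ha⟩ := (eventually_map.1 hb).exists
      (hu a).trans ha

section

variable {X Y : Type*}

theorem isPorousAt_of_frequently [PseudoMetricSpace X] {S : Set X} {x : X} {η : ℝ} (hη : 0 < η)
    (h : ∃ᶠ y in 𝓝[≠] x, S ∩ ball y (η * dist x y) = ∅) : IsPorousAt S x := by
  obtain ⟨y, hy, hyS⟩ := exists_seq_forall_of_frequently (h.and_eventually self_mem_nhdsWithin)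
  exact ⟨η, hη, y, tendsto_nhds_of_tendsto_nhdsWithin hy, fun n ↦ (hyS n).2, fun n ↦ (hyS n).1⟩

theorem LipschitzWith.dist_le_of_dist_le_mul [PseudoMetricSpace X] [PseudoMetricSpace Y]
    {f : X → Y} {L : NNReal} (hf : LipschitzWith L f) {x y z : X} {c η : ℝ} (hc : 0 ≤ c)
    (hz : dist (f z) (f x) ≤ c * dist z x) (hzy : dist z y ≤ η * dist y x) :
    dist (f y) (f x) ≤ (c + η * (L + c)) * dist y x :=
  calc dist (f y) (f x) ≤ dist (f y) (f z) + dist (f z) (f x) := dist_triangle _ _ _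
    _ ≤ L * dist y z + c * (dist z y + dist y x) := by
      gcongr
      · exact hf.dist_le_mul y z
      · exact hz.trans (by gcongr; exact dist_triangle _ _ _)
    _ ≤ L * (η * dist y x) + c * (η * dist y x + dist y x) := by
      rw [dist_comm y z]; gcongr
    _ = (c + η * (L + c)) * dist y x := by ring

theorem eventually_dist_le_mul_of_div_le [MetricSpace X] [PseudoMetricSpace Y] {f : X → Y}
    {S : Set X} {x : X} {c : ℝ} (h : ∀ᶠ z in 𝓝[S \ {x}] x, dist (f z) (f x) / dist z x ≤ c) :
    ∀ᶠ z in 𝓝[S] x, dist (f z) (f x) ≤ c * dist z x := by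
  rw [eventually_nhdsWithin_iff] at h ⊢
  filter_upwards [h] with z hz hzS
  rcases eq_or_ne z x with rfl | hzx
  · simp
  · exact (div_le_iff₀ (dist_pos.2 hzx)).1 (hz ⟨hzS, hzx⟩)

theorem isPorousAt_of_frequently_lt_div [PseudoMetricSpace X] [PseudoMetricSpace Y] {f : X → Y}
    {L : NNReal} (hf : LipschitzWith L f) {S : Set X} {x : X} {c c' : ℝ} (hc : 0 ≤ c)
    (hcc' : c < c') (hS : ∀ᶠ z in 𝓝[S] x, dist (f z) (f x) ≤ c * dist z x)
    (hX : ∃ᶠ y in 𝓝[≠] x, c' < dist (f y) (f x) / dist y x) : IsPorousAt S x := by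
  obtain ⟨η, ⟨hη0, hη1⟩, hηc⟩ : ∃ η ∈ Ioc (0 : ℝ) 1, c + η * (L + c) < c' := by
    have hcont : Continuous fun η : ℝ ↦ c + η * (L + c) := by fun_prop
    have hlim : Tendsto (fun η : ℝ ↦ c + η * (L + c)) (𝓝[>] 0) (𝓝 c) := by
      simpa using (hcont.tendsto 0).mono_left nhdsWithin_le_nhds
    exact (Eventually.and (Ioc_mem_nhdsGT one_pos) (hlim.eventually (gt_mem_nhds hcc'))).exists
  obtain ⟨δ, hδ, hδS⟩ := Metric.eventually_nhds_iff.1 (eventually_nhdsWithin_iff.1 hS)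
  have hnear : ∀ᶠ y in 𝓝[≠] x, dist y x < δ / 2 :=
    nhdsWithin_le_nhds (Metric.eventually_nhds_iff.2 ⟨δ / 2, by positivity, fun _ hy ↦ hy⟩)
  refine isPorousAt_of_frequently hη0 ((hX.and_eventually hnear).mono ?_)
  rintro y ⟨hy, hyδ⟩
  refine eq_empty_iff_forall_notMem.2 fun z ⟨hzS, hzy⟩ ↦ hy.not_ge ?_
  rw [mem_ball, dist_comm x y] at hzy
  have hzx : dist z x < δ := by
    linarith [dist_triangle z y x, mul_le_of_le_one_left (dist_nonneg : 0 ≤ dist y x) hη1]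
  have hK : 0 ≤ c + η * (L + c) := by positivity
  exact (div_le_of_le_mul₀ dist_nonneg hK
    (hf.dist_le_of_dist_le_mul hc (hδS hzx hzS) hzy.le)).trans hηc.le

end

theorem porosity_of_limsup_lt_general {X Y : Type*} [MetricSpace X] [MetricSpace Y]
    (f : X → Y) (L : NNReal) (hf : LipschitzWith L f)
    (S : Set X) (x : X)
    (h : Filter.limsup (fun y => dist (f y) (f x) / dist y x) (nhdsWithin x (S \ {x})) <
         Filter.limsup (fun y => dist (f y) (f x) / dist y x) (nhdsWithin x {x}ᶜ)) :
    ∃ η > (0 : ℝ), ∃ y : ℕ → X, Tendsto y atTop (nhds x) ∧ (∀ n, y n ≠ x) ∧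
      ∀ n, S ∩ ball (y n) (η * dist x (y n)) = ∅ := by
  set g : X → ℝ := fun y ↦ dist (f y) (f x) / dist y x
  have hg0 : ∀ y, 0 ≤ g y := fun y ↦ div_nonneg dist_nonneg dist_nonneg
  have hgL : ∀ y, g y ≤ L := fun y ↦
    div_le_of_le_mul₀ dist_nonneg L.coe_nonneg (hf.dist_le_mul y x)
  -- if `x` were isolated, both limsups would be taken over `⊥`
  have : (𝓝[≠] x).NeBot := by
    refine ⟨fun (hbot : 𝓝[≠] x = ⊥) ↦ h.ne ?_⟩
    have hS : 𝓝[S \ {x}] x ≤ 𝓝[≠] x := nhdsWithin_mono x fun _ hz ↦ hz.2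
    rw [hbot, le_bot_iff.1 (hS.trans hbot.le)]
  obtain ⟨c', hac', hc'b⟩ := exists_between h
  obtain ⟨c, hac, hcc'⟩ := exists_between hac'
  refine isPorousAt_of_frequently_lt_div hf ((Real.limsup_nonneg hg0).trans hac.le) hcc'
    (eventually_dist_le_mul_of_div_le ?_) (frequently_lt_of_lt_limsup ?_ hc'b)
  · exact (eventually_lt_of_limsup_lt hac (isBoundedUnder_of ⟨L, hgL⟩)).mono fun _ ↦ le_of_lt
  · exact isCoboundedUnder_le_of_le _ hg0

/-- If the pointwise Lipschitz constant of a Lipschitz map `f` at `x ∈ S` computed in the whole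
space strictly exceeds the one computed within `S`, then `S` is porous at `x`: there are `η > 0`
and points `yₙ → x`, `yₙ ≠ x`, with `S ∩ B(yₙ, η d(x,yₙ)) = ∅`. -/
theorem porosity_of_limsup_lt {X Y : Type*} [MetricSpace X] [MetricSpace Y]
    (f : X → Y) (L : NNReal) (hL : 0 < L) (hf : LipschitzWith L f)
    (S : Set X) (x : X) (hx : x ∈ S)
    (h : Filter.limsup (fun y => dist (f y) (f x) / dist y x) (nhdsWithin x (S \ {x})) <
         Filter.limsup (fun y => dist (f y) (f x) / dist y x) (nhdsWithin x {x}ᶜ)) :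
    ∃ η > (0 : ℝ), ∃ y : ℕ → X, Tendsto y atTop (nhds x) ∧ (∀ n, y n ≠ x) ∧
      ∀ n, S ∩ ball (y n) (η * dist x (y n)) = ∅ :=
  porosity_of_limsup_lt_general f L hf S x h
end

section
/- Let (X,d,μ) be a metric measure space in which every porous set has measure zero, let (Y,d') be a metric space, f : X → Y Lipschitz, and S ⊆ X measurable. Then for μ-almost every x ∈ S, limsup_{X ∋ y → x} d'(f(y),f(x))/d(x,y) = limsup_{S ∋ y → x} d'(f(y),f(x))/d(x,y). -/
open Metric Filter Set Topology MeasureTheory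

/-- `S` is porous at `x`: for some `η > 0` there are points `yₙ → x`, `yₙ ≠ x`, whose balls of
radius `η d(x,yₙ)` miss `S`. -/
def PorousAt {X : Type*} [MetricSpace X] (S : Set X) (x : X) : Prop :=
  ∃ η > (0 : ℝ), ∃ y : ℕ → X, Tendsto y atTop (nhds x) ∧ (∀ n, y n ≠ x) ∧
    ∀ n, S ∩ ball (y n) (η * dist x (y n)) = ∅

/-!
Fix rationals `a < b` and let `E ⊆ S` be the set of points where the upper difference quotient
of `f` within `S` is `< a` while the one in the whole space is `> b`. Every point where the two
disagree lies in one of these countably many sets, so it suffices that each `E` is porous.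
Near `x ∈ E` there are points `y` with `d(f y, f x) > b d(y, x)`, while `d(f z, f x) ≤ a d(z, x)`
for all `z ∈ S` close to `x`; since `f` is `L`-Lipschitz, no such `z` lies within distance
`η d(y, x)` of `y` once `η (L + a) ≤ b - a`. So `E` misses the balls `B(y, η d(x, y))`.
-/

section DiffQuot

variable {X Y : Type*} [PseudoMetricSpace X] [PseudoMetricSpace Y]

noncomputable def diffQuot (f : X → Y) (x y : X) : ℝ := dist (f y) (f x) / dist y x

lemma diffQuot_nonneg (f : X → Y) (x y : X) : 0 ≤ diffQuot f x y :=
  div_nonneg dist_nonneg dist_nonneg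

lemma LipschitzWith.diffQuot_le {f : X → Y} {L : NNReal} (hf : LipschitzWith L f) (x y : X) :
    diffQuot f x y ≤ L := by
  rcases eq_or_ne (dist y x) 0 with h | h
  · simp [diffQuot, h]
  · exact (div_le_iff₀ (dist_nonneg.lt_of_ne' h)).2 (hf.dist_le_mul y x)

lemma LipschitzWith.isBoundedUnder_diffQuot {f : X → Y} {L : NNReal} (hf : LipschitzWith L f)
    (x : X) (F : Filter X) : F.IsBoundedUnder (· ≤ ·) (diffQuot f x) :=
  isBoundedUnder_of ⟨L, hf.diffQuot_le x⟩

lemma LipschitzWith.mul_dist_le_dist_of_dist_le_mul {f : X → Y} {L : NNReal}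
    (hf : LipschitzWith L f) {a b η : ℝ} (ha : 0 ≤ a) (hη : η * (L + a) ≤ b - a) {x y z : X}
    (hz : dist (f z) (f x) ≤ a * dist z x) (hy : b * dist y x < dist (f y) (f x)) :
    η * dist y x ≤ dist z y := by
  by_contra! hzy
  have hzx : dist z x ≤ dist z y + dist y x := dist_triangle z y x
  have : dist (f y) (f x) ≤ b * dist y x :=
    calc dist (f y) (f x) ≤ dist (f y) (f z) + dist (f z) (f x) := dist_triangle _ _ _
      _ ≤ L * dist z y + a * (dist z y + dist y x) := by
          gcongr
          · exact dist_comm y z ▸ hf.dist_le_mul y z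
          · exact hz.trans (by gcongr)
      _ = (L + a) * dist z y + a * dist y x := by ring
      _ ≤ (L + a) * (η * dist y x) + a * dist y x := by gcongr
      _ ≤ b * dist y x := by nlinarith [dist_nonneg (x := y) (y := x)]
  linarith

end DiffQuot

namespace Real

variable {α : Type*} {u : α → ℝ} {F G : Filter α}

lemma limsup_bot (u : α → ℝ) : limsup u ⊥ = 0 := by
  simp [limsup_eq]

lemma limsup_nonneg_s4 (hu : 0 ≤ u) : 0 ≤ limsup u F := by
  rcases eq_or_neBot F with rfl | hF
  · rw [limsup_bot]
  · exact Real.sInf_nonneg fun a ha => ha.exists.elim fun n hn => (hu n).trans hn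

lemma limsup_le_limsup_of_nonneg (hu : 0 ≤ u) (hG : G.IsBoundedUnder (· ≤ ·) u) (h : F ≤ G) :
    limsup u F ≤ limsup u G := by
  rcases eq_or_neBot F with rfl | hF
  · exact (limsup_bot u).trans_le (limsup_nonneg_s4 hu)
  · exact limsup_le_limsup_of_le h (isBoundedUnder_of ⟨0, hu⟩).isCoboundedUnder_le hG

lemma frequently_lt_of_lt_limsup_of_nonneg {b : ℝ} (hu : 0 ≤ u) (hb : 0 ≤ b)
    (h : b < limsup u F) : ∃ᶠ n in F, b < u n := by
  rcases eq_or_neBot F with rfl | hF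
  · exact absurd h (limsup_bot u ▸ hb.not_gt)
  · exact frequently_lt_of_lt_limsup (isBoundedUnder_of ⟨0, hu⟩).isCoboundedUnder_le h

end Real

lemma porousAt_of_frequently {X : Type*} [MetricSpace X] {S : Set X} {x : X} {η : ℝ}
    (hη : 0 < η) (h : ∃ᶠ y in 𝓝[≠] x, S ∩ ball y (η * dist x y) = ∅) : PorousAt S x := by
  obtain ⟨y, hy_tendsto, hy⟩ :=
    exists_seq_forall_of_frequently (h.and_eventually self_mem_nhdsWithin)
  exact ⟨η, hη, y, hy_tendsto.mono_right nhdsWithin_le_nhds, fun n => (hy n).2,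
    fun n => (hy n).1⟩

section GapSet

variable {X Y : Type*} [MetricSpace X] [MetricSpace Y] {f : X → Y} {L : NNReal}

def gapSet (f : X → Y) (S : Set X) (a b : ℝ) : Set X :=
  {x ∈ S | limsup (diffQuot f x) (𝓝[S \ {x}] x) < a ∧ b < limsup (diffQuot f x) (𝓝[≠] x)}

lemma LipschitzWith.exists_dist_le_mul_of_limsup_lt (hf : LipschitzWith L f) {S : Set X}
    {x : X} {a : ℝ} (h : limsup (diffQuot f x) (𝓝[S \ {x}] x) < a) :
    ∃ r > 0, ∀ z ∈ S, dist z x < r → dist (f z) (f x) ≤ a * dist z x := by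
  obtain ⟨r, hr, hball⟩ := Metric.eventually_nhds_iff.1 <| eventually_nhdsWithin_iff.1 <|
    eventually_lt_of_limsup_lt h (hf.isBoundedUnder_diffQuot x _)
  refine ⟨r, hr, fun z hzS hzx => ?_⟩
  rcases eq_or_ne z x with rfl | hne
  · simp
  · exact (div_le_iff₀ (dist_pos.2 hne)).1 (hball hzx ⟨hzS, hne⟩).le

lemma LipschitzWith.porousAt_gapSet (hf : LipschitzWith L f) (S : Set X) {a b : ℝ}
    (hab : a < b) : ∀ x ∈ gapSet f S a b, PorousAt (gapSet f S a b) x := by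
  rintro x ⟨-, hS_lt, hlt_lim⟩
  have ha : 0 ≤ a := (Real.limsup_nonneg_s4 (diffQuot_nonneg f x)).trans hS_lt.le
  obtain ⟨r, hr, hS_le⟩ := hf.exists_dist_le_mul_of_limsup_lt hS_lt
  obtain ⟨η, hη, hηL⟩ := exists_pos_mul_lt (sub_pos.2 hab) (L + a)
  set η' := min η 1
  have hη'L : η' * (L + a) ≤ b - a :=
    (mul_le_mul_of_nonneg_right (min_le_left η 1) (by positivity)).trans (by linarith)
  have hclose : ∀ᶠ y in 𝓝[≠] x, y ≠ x ∧ dist y x < r / 2 :=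
    (eventually_mem_nhdsWithin (a := x) (s := {x}ᶜ)).and <|
      nhdsWithin_le_nhds <| Metric.ball_mem_nhds x (half_pos hr)
  refine porousAt_of_frequently (lt_min hη one_pos) <|
    (Real.frequently_lt_of_lt_limsup_of_nonneg (diffQuot_nonneg f x) (ha.trans hab.le)
      hlt_lim).mp (hclose.mono fun y ⟨hyx, hyr⟩ hby => ?_)
  have hy : b * dist y x < dist (f y) (f x) := (lt_div_iff₀ (dist_pos.2 hyx)).1 hby
  refine eq_empty_iff_forall_notMem.2 fun z ⟨⟨hzS, _⟩, hzy⟩ => ?_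
  rw [mem_ball, dist_comm x y] at hzy
  have hzx : dist z x < r :=
    calc dist z x ≤ dist z y + dist y x := dist_triangle z y x
      _ < η' * dist y x + dist y x := by gcongr
      _ ≤ 2 * dist y x := by nlinarith [min_le_right η 1, dist_nonneg (x := y) (y := x)]
      _ < r := by linarith
  exact (hzy.trans_le' (hf.mul_dist_le_dist_of_dist_le_mul ha hη'L (hS_le z hzS hzx) hy)).false

lemma LipschitzWith.subset_iUnion_gapSet (hf : LipschitzWith L f) (S : Set X) :
    {x ∈ S | limsup (diffQuot f x) (𝓝[≠] x) ≠ limsup (diffQuot f x) (𝓝[S \ {x}] x)} ⊆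
      ⋃ (a : ℚ) (b : ℚ) (_ : a < b), gapSet f S a b := by
  rintro x ⟨hxS, hne⟩
  have hle : limsup (diffQuot f x) (𝓝[S \ {x}] x) ≤ limsup (diffQuot f x) (𝓝[≠] x) :=
    Real.limsup_le_limsup_of_nonneg (diffQuot_nonneg f x) (hf.isBoundedUnder_diffQuot x _)
      (nhdsWithin_mono x (sdiff_subset_compl S {x}))
  obtain ⟨a, hSa, hab'⟩ := exists_rat_btwn (hle.lt_of_ne hne.symm)
  obtain ⟨b, hab, hb⟩ := exists_rat_btwn hab'
  exact mem_iUnion₂.2 ⟨a, b, mem_iUnion.2 ⟨by exact_mod_cast hab, hxS, hSa, hb⟩⟩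

end GapSet

/-- In a metric measure space where every porous set is null, for any Lipschitz `f` and any
measurable `S`, the pointwise Lipschitz constant at almost every `x ∈ S` computed within `S`
agrees with the one computed in the whole space. -/
theorem limsup_eq_ae_of_porous_null {X Y : Type*} [MetricSpace X] [MeasurableSpace X]
    [MetricSpace Y] (μ : Measure X)
    (hporous : ∀ P : Set X, (∀ x ∈ P, PorousAt P x) → μ P = 0)
    (f : X → Y) (L : NNReal) (hf : LipschitzWith L f)
    (S : Set X) (hS : MeasurableSet S) :
    ∀ᵐ x ∂(μ.restrict S),
      Filter.limsup (fun y => dist (f y) (f x) / dist y x) (nhdsWithin x {x}ᶜ) =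
      Filter.limsup (fun y => dist (f y) (f x) / dist y x) (nhdsWithin x (S \ {x})) := by
  rw [ae_iff, Measure.restrict_apply' hS]
  refine measure_mono_null (fun x ⟨hne, hxS⟩ => hf.subset_iUnion_gapSet S ⟨hxS, hne⟩) ?_
  refine measure_iUnion_null fun a => measure_iUnion_null fun b => measure_iUnion_null fun hab => ?_
  exact hporous _ (hf.porousAt_gapSet S (by exact_mod_cast hab))
end

section
/- Let f : (X,d_X,μ) → (Y,d_Y) be a Lipschitz function on a metric measure space with μ(X) < ∞ such that Lip(f,x) < ε for μ-a.e. x ∈ X, where ε > 0. Then for every δ > 0 there exist a subset X' ⊆ X with μ(X') ≥ μ(X) − δ and R > 0 such that whenever x, y ∈ X' and d_X(x,y) < R, one has d_Y(f(x),f(y)) ≤ ε d_X(x,y). -/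
/-!
The sets of points at which `f` is `ε`-Lipschitz towards the whole ball of radius `1 / (n + 1)`
increase with `n`, and since `Lip(f, x) < ε` almost everywhere they exhaust `X` up to a null set.
Continuity of the finite measure from below then gives one of them of measure at least
`μ(X) - δ`, and `R = 1 / (n + 1)` works on it.
-/

open Metric Filter Set Topology MeasureTheory

/-- The pointwise (upper) Lipschitz constant `Lip(f,x)`. -/
noncomputable def pLip {X Y : Type*} [MetricSpace X] [MetricSpace Y] (f : X → Y) (x : X) : ℝ :=
  Filter.limsup (fun y => dist (f y) (f x) / dist y x) (nhdsWithin x {x}ᶜ)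

def localLipSet {X Y : Type*} [MetricSpace X] [MetricSpace Y] (f : X → Y) (ε r : ℝ) : Set X :=
  {x | ∀ y ∈ ball x r, dist (f y) (f x) ≤ ε * dist y x}

theorem localLipSet_antitone {X Y : Type*} [MetricSpace X] [MetricSpace Y] (f : X → Y) (ε : ℝ) :
    Antitone (localLipSet f ε) :=
  fun _ _ hrs _ hx y hy => hx y (ball_subset_ball hrs hy)

/- A real `limsup` of quotients unbounded above is the junk value `0`; this boundedness is what
lets `pLip f x < ε` say anything. -/
theorem LipschitzWith.isBoundedUnder_dist_div_dist {X Y : Type*} [MetricSpace X] [MetricSpace Y]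
    {f : X → Y} {K : NNReal} (hf : LipschitzWith K f) (l : Filter X) (x : X) :
    IsBoundedUnder (· ≤ ·) l (fun y => dist (f y) (f x) / dist y x) :=
  isBoundedUnder_of ⟨K, fun y =>
    div_le_of_le_mul₀ dist_nonneg K.coe_nonneg (hf.dist_le_mul y x)⟩

theorem LipschitzWith.exists_pos_mem_localLipSet {X Y : Type*} [MetricSpace X] [MetricSpace Y]
    {f : X → Y} {K : NNReal} (hf : LipschitzWith K f) {ε : ℝ} {x : X} (hx : pLip f x < ε) :
    ∃ r > 0, x ∈ localLipSet f ε r := by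
  have hev : ∀ᶠ y in 𝓝[≠] x, dist (f y) (f x) / dist y x < ε :=
    eventually_lt_of_limsup_lt hx (hf.isBoundedUnder_dist_div_dist _ x)
  obtain ⟨r, hr, hball⟩ := Metric.eventually_nhds_iff.1 (eventually_nhdsWithin_iff.1 hev)
  refine ⟨r, hr, fun y hy => ?_⟩
  rcases eq_or_ne y x with rfl | hyx
  · simp
  · exact ((div_lt_iff₀ (dist_pos.2 hyx)).1 (hball hy hyx)).le

theorem exists_measure_univ_sub_le_of_ae_mem_iUnion {X ι : Type*} [MeasurableSpace X]
    [SemilatticeSup ι] [Nonempty ι] [(atTop : Filter ι).IsCountablyGenerated]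
    (μ : Measure X) [IsFiniteMeasure μ] {A : ι → Set X} (hA : Monotone A)
    (hae : ∀ᵐ x ∂μ, x ∈ ⋃ i, A i) {δ : ENNReal} (hδ : δ ≠ 0) :
    ∃ i, μ univ - δ ≤ μ (A i) := by
  have hunion : μ (⋃ i, A i) = μ univ := measure_congr (ae_eq_univ.2 (ae_iff.1 hae))
  have htend : Tendsto (fun i => μ (A i) + δ) atTop (𝓝 (μ univ + δ)) := by
    rw [← hunion]
    exact (tendsto_measure_iUnion_atTop hA).add_const δ
  have hlt : μ univ < μ univ + δ := ENNReal.lt_add_right (measure_ne_top μ univ) hδ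
  obtain ⟨i, hi⟩ := (htend.eventually (eventually_gt_nhds hlt)).exists
  exact ⟨i, tsub_le_iff_right.2 hi.le⟩

theorem lipschitz_decomposition_general {X Y : Type*} [MetricSpace X] [MeasurableSpace X] [MetricSpace Y]
    (μ : Measure X) [IsFiniteMeasure μ]
    (f : X → Y) (L : NNReal) (hf : LipschitzWith L f)
    (ε : ℝ) (hlip : ∀ᵐ x ∂μ, pLip f x < ε)
    (δ : ℝ) (hδ : 0 < δ) :
    ∃ X' : Set X, ∃ R > (0 : ℝ), μ Set.univ - ENNReal.ofReal δ ≤ μ X' ∧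
      ∀ x ∈ X', ∀ y ∈ X', dist x y < R → dist (f x) (f y) ≤ ε * dist x y := by
  set A : ℕ → Set X := fun n => localLipSet f ε (1 / (n + 1))
  have hA : Monotone A := fun m n hmn =>
    localLipSet_antitone f ε (Nat.one_div_le_one_div hmn)
  have hae : ∀ᵐ x ∂μ, x ∈ ⋃ n, A n := by
    filter_upwards [hlip] with x hx
    obtain ⟨r, hr, hxr⟩ := hf.exists_pos_mem_localLipSet hx
    obtain ⟨n, hn⟩ := exists_nat_one_div_lt hr
    exact mem_iUnion.2 ⟨n, localLipSet_antitone f ε hn.le hxr⟩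
  obtain ⟨n, hn⟩ :=
    exists_measure_univ_sub_le_of_ae_mem_iUnion μ hA hae (ENNReal.ofReal_pos.2 hδ).ne'
  refine ⟨A n, 1 / (n + 1), Nat.one_div_pos_of_nat, hn, fun x hx y _ hxy => ?_⟩
  rw [dist_comm (f x), dist_comm x y]
  exact hx y (mem_ball'.2 hxy)

/-- If `f` is Lipschitz on a finite metric measure space and `Lip(f,x) < ε` a.e., then for every
`δ > 0` there are `X' ⊆ X` with `μ(X') ≥ μ(X) − δ` and `R > 0` so that `f` is `ε`-Lipschitz on
pairs of points of `X'` at distance less than `R`. -/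
theorem lipschitz_decomposition {X Y : Type*} [MetricSpace X] [MeasurableSpace X] [MetricSpace Y]
    (μ : Measure X) [IsFiniteMeasure μ]
    (f : X → Y) (L : NNReal) (hf : LipschitzWith L f)
    (ε : ℝ) (hε : 0 < ε) (hlip : ∀ᵐ x ∂μ, pLip f x < ε)
    (δ : ℝ) (hδ : 0 < δ) :
    ∃ X' : Set X, ∃ R > (0 : ℝ), μ Set.univ - ENNReal.ofReal δ ≤ μ X' ∧
      ∀ x ∈ X', ∀ y ∈ X', dist x y < R → dist (f x) (f y) ≤ ε * dist x y :=
  lipschitz_decomposition_general μ f L hf ε hlip δ hδ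
end

section
/- Let V be a normed vector space over ℝ, let T ∈ L(ℝⁿ, V), and let ε_m > 0 be small enough (depending only on m = n). If i attains the maximum of ‖T(e_j)‖ over j = 1,...,n, then for every vector v in the cone C(e_i, ε_n) = { w ∈ ℝⁿ : ‖w − (w·e_i) e_i‖ ≤ ε_n |w·e_i| } one has ‖T(v)‖ ≥ (1/(2n)) ‖T‖ ‖v‖. In particular ‖T‖ ≤ n max_j ‖T(e_j)‖. -/
/-!
Expanding `v` in the standard basis gives `‖T v‖ ≤ n · maxⱼ ‖T eⱼ‖ · ‖v‖`, hence the bound on `‖T‖`.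
A vector `v` of the cone is `vᵢ eᵢ` plus an error of norm at most `ε |vᵢ|`, so
`‖T v‖ ≥ |vᵢ| (‖T eᵢ‖ - ε ‖T‖) ≥ ¾ |vᵢ| ‖T eᵢ‖` as soon as `n ε ≤ ¼`, while
`‖T‖ ‖v‖ ≤ n ‖T eᵢ‖ (1 + ε) |vᵢ|`.
-/

open Finset

variable {ι V : Type*} [DecidableEq ι]

theorem EuclideanSpace.smul_single_one (i : ι) (a : ℝ) :
    a • EuclideanSpace.single i (1 : ℝ) = EuclideanSpace.single i a := by
  ext j
  simp [PiLp.single_apply]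

variable [Fintype ι] [NormedAddCommGroup V] [NormedSpace ℝ V]

namespace EuclideanSpace

theorem sum_smul_single_one (v : EuclideanSpace ℝ ι) :
    ∑ j, v j • EuclideanSpace.single j (1 : ℝ) = v := by
  simpa [basisFun_apply] using (basisFun ι ℝ).sum_repr v

theorem norm_le_of_norm_sub_single_le {v : EuclideanSpace ℝ ι} {i : ι} {ε : ℝ}
    (hv : ‖v - EuclideanSpace.single i (v i)‖ ≤ ε * |v i|) : ‖v‖ ≤ (1 + ε) * |v i| :=
  calc ‖v‖ ≤ ‖EuclideanSpace.single i (v i)‖ + ‖v - EuclideanSpace.single i (v i)‖ :=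
        norm_le_insert' _ _
    _ ≤ |v i| + ε * |v i| := by rw [PiLp.norm_single, Real.norm_eq_abs]; gcongr
    _ = (1 + ε) * |v i| := by ring

end EuclideanSpace

namespace ContinuousLinearMap

theorem norm_apply_le_card_mul {T : EuclideanSpace ℝ ι →L[ℝ] V} {M : ℝ}
    (hM : ∀ j, ‖T (EuclideanSpace.single j (1 : ℝ))‖ ≤ M) (v : EuclideanSpace ℝ ι) :
    ‖T v‖ ≤ Fintype.card ι * M * ‖v‖ :=
  calc ‖T v‖ = ‖∑ j, v j • T (EuclideanSpace.single j (1 : ℝ))‖ := by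
        simp_rw [← map_smul, ← map_sum, EuclideanSpace.sum_smul_single_one]
    _ ≤ ∑ j, ‖v j • T (EuclideanSpace.single j (1 : ℝ))‖ := norm_sum_le _ _
    _ ≤ ∑ _j : ι, ‖v‖ * M := by
        gcongr with j
        rw [norm_smul]
        exact mul_le_mul (PiLp.norm_apply_le v j) (hM j) (norm_nonneg _) (norm_nonneg _)
    _ = Fintype.card ι * M * ‖v‖ := by rw [sum_const, card_univ, nsmul_eq_mul]; ring

theorem opNorm_le_card_mul {T : EuclideanSpace ℝ ι →L[ℝ] V} {M : ℝ}
    (hM : ∀ j, ‖T (EuclideanSpace.single j (1 : ℝ))‖ ≤ M) : ‖T‖ ≤ Fintype.card ι * M := by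
  rcases isEmpty_or_nonempty ι with hι | ⟨⟨j⟩⟩
  · have hT : T = 0 := ext fun v => by rw [Subsingleton.elim v 0, map_zero, zero_apply]
    simp [hT]
  exact T.opNorm_le_bound (mul_nonneg (Nat.cast_nonneg _) ((norm_nonneg _).trans (hM j)))
    (T.norm_apply_le_card_mul hM)

theorem mul_sub_le_norm_apply_of_norm_sub_single_le (T : EuclideanSpace ℝ ι →L[ℝ] V)
    {v : EuclideanSpace ℝ ι} {i : ι} {ε : ℝ}
    (hv : ‖v - EuclideanSpace.single i (v i)‖ ≤ ε * |v i|) :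
    |v i| * (‖T (EuclideanSpace.single i (1 : ℝ))‖ - ε * ‖T‖) ≤ ‖T v‖ := by
  have hsplit : T v = v i • T (EuclideanSpace.single i (1 : ℝ)) +
      T (v - EuclideanSpace.single i (v i)) := by
    rw [map_sub, ← map_smul, EuclideanSpace.smul_single_one, add_sub_cancel]
  calc |v i| * (‖T (EuclideanSpace.single i (1 : ℝ))‖ - ε * ‖T‖)
      = ‖v i • T (EuclideanSpace.single i (1 : ℝ))‖ - ‖T‖ * (ε * |v i|) := by
        rw [norm_smul, Real.norm_eq_abs]; ring
    _ ≤ ‖v i • T (EuclideanSpace.single i (1 : ℝ))‖ -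
          ‖T (v - EuclideanSpace.single i (v i))‖ := by
        gcongr
        exact T.le_of_opNorm_le le_rfl _ |>.trans (by gcongr)
    _ ≤ ‖T v‖ := by rw [hsplit]; exact norm_sub_le_norm_add _ _

theorem norm_mul_norm_le_of_norm_sub_single_le {T : EuclideanSpace ℝ ι →L[ℝ] V} {N ε : ℝ}
    {v : EuclideanSpace ℝ ι} {i : ι} (hT : ‖T‖ ≤ N * ‖T (EuclideanSpace.single i (1 : ℝ))‖)
    (hN : 0 ≤ N) (hε : 0 ≤ ε) (hε_half : ε ≤ 1 / 2) (hNε : N * ε ≤ 1 / 4)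
    (hv : ‖v - EuclideanSpace.single i (v i)‖ ≤ ε * |v i|) :
    ‖T‖ * ‖v‖ ≤ 2 * N * ‖T v‖ := by
  set M := ‖T (EuclideanSpace.single i (1 : ℝ))‖
  have hM : 0 ≤ M := norm_nonneg _
  have ha : 0 ≤ |v i| := abs_nonneg _
  have hεT : ε * ‖T‖ ≤ M / 4 := by nlinarith [mul_le_mul_of_nonneg_left hT hε]
  have hlower : 3 / 4 * (|v i| * M) ≤ ‖T v‖ := by
    nlinarith [T.mul_sub_le_norm_apply_of_norm_sub_single_le hv]
  calc ‖T‖ * ‖v‖ ≤ N * M * ((1 + ε) * |v i|) :=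
        mul_le_mul hT (EuclideanSpace.norm_le_of_norm_sub_single_le hv) (norm_nonneg _)
          (by positivity)
    _ ≤ 2 * N * (3 / 4 * (|v i| * M)) := by nlinarith [mul_nonneg (mul_nonneg hN hM) ha]
    _ ≤ 2 * N * ‖T v‖ := by gcongr

end ContinuousLinearMap

theorem small_cone_estimate_general (n : ℕ) :
    ∃ ε : ℝ, 0 < ε ∧
      ∀ (V : Type) [NormedAddCommGroup V] [NormedSpace ℝ V]
        (T : EuclideanSpace ℝ (Fin n) →L[ℝ] V) (i : Fin n),
        (∀ j : Fin n, ‖T (EuclideanSpace.single j (1 : ℝ))‖ ≤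
            ‖T (EuclideanSpace.single i (1 : ℝ))‖) →
        (‖T‖ ≤ (n : ℝ) * ‖T (EuclideanSpace.single i (1 : ℝ))‖ ∧
          ∀ v : EuclideanSpace ℝ (Fin n),
            ‖v - EuclideanSpace.single i (v i)‖ ≤ ε * |v i| →
            (1 / (2 * (n : ℝ))) * ‖T‖ * ‖v‖ ≤ ‖T v‖) := by
  refine ⟨1 / (4 * (n + 1)), by positivity, fun V _ _ T i hi => ?_⟩
  have hT : ‖T‖ ≤ n * ‖T (EuclideanSpace.single i (1 : ℝ))‖ := by
    simpa using T.opNorm_le_card_mul hi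
  refine ⟨hT, fun v hv => ?_⟩
  have hn : (0 : ℝ) < n := by exact_mod_cast i.pos
  have hε_half : 1 / (4 * ((n : ℝ) + 1)) ≤ 1 / 2 := by
    gcongr; linarith
  have hnε : (n : ℝ) * (1 / (4 * (n + 1))) ≤ 1 / 4 := by
    rw [mul_one_div, div_le_div_iff₀ (by positivity) (by norm_num)]; linarith
  have key := T.norm_mul_norm_le_of_norm_sub_single_le hT hn.le (by positivity) hε_half hnε hv
  rw [mul_assoc, one_div_mul_eq_div, div_le_iff₀ (by positivity)]
  linarith

/-- There is `ε_n > 0`, depending only on `n`, such that for every operator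
`T : ℝⁿ → V` and every index `i` attaining `max_j ‖T(e_j)‖`, one has `‖T‖ ≤ n max_j ‖T(e_j)‖`
and `‖T v‖ ≥ (1/(2n)) ‖T‖ ‖v‖` for all `v` in the cone `C(e_i, ε_n)`. -/
theorem small_cone_estimate (n : ℕ) (hn : 0 < n) :
    ∃ ε : ℝ, 0 < ε ∧
      ∀ (V : Type) [NormedAddCommGroup V] [NormedSpace ℝ V]
        (T : EuclideanSpace ℝ (Fin n) →L[ℝ] V) (i : Fin n),
        (∀ j : Fin n, ‖T (EuclideanSpace.single j (1 : ℝ))‖ ≤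
            ‖T (EuclideanSpace.single i (1 : ℝ))‖) →
        (‖T‖ ≤ (n : ℝ) * ‖T (EuclideanSpace.single i (1 : ℝ))‖ ∧
          ∀ v : EuclideanSpace ℝ (Fin n),
            ‖v - EuclideanSpace.single i (v i)‖ ≤ ε * |v i| →
            (1 / (2 * (n : ℝ))) * ‖T‖ * ‖v‖ ≤ ‖T v‖) :=
  small_cone_estimate_general n
end

section
/- Let ξ, δ, L > 0, let p₁,...,pₙ ∈ ℝⁿ be ξ-separated vectors with ‖pᵢ‖ > δ for each i, and let f₁,...,fₙ be elements of a Banach space V with ‖fᵢ‖ ≤ L. Then p₁,...,pₙ are linearly independent, and the unique linear map T : ℝⁿ → V with T(pᵢ) = fᵢ for all i satisfies ‖T‖ ≤ L n / (ξ δ). -/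
/-!
Separation bounds every coordinate of `x = ∑ lᵢ pᵢ`: `ξ δ |lᵢ| < ξ ‖lᵢ pᵢ‖ < ‖x‖`. Taking `x = 0`
shows the `pᵢ` are independent, hence a basis of `ℝⁿ`, and then
`‖T x‖ ≤ ∑ |lᵢ| ‖fᵢ‖ ≤ n L ‖x‖ / (ξ δ)`.
-/

section

variable {ι E F : Type*} [Fintype ι] [NormedAddCommGroup E] [NormedSpace ℝ E]
  [NormedAddCommGroup F] [NormedSpace ℝ F]

def IsSeparated (ξ : ℝ) (v : ι → E) : Prop :=
  ∀ l : ι → ℝ, l ≠ 0 → ∀ i, ξ * ‖l i • v i‖ < ‖∑ j, l j • v j‖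

namespace IsSeparated

variable {ξ δ : ℝ} {v : ι → E}

theorem mul_norm_smul_le (h : IsSeparated ξ v) (l : ι → ℝ) (i : ι) :
    ξ * ‖l i • v i‖ ≤ ‖∑ j, l j • v j‖ := by
  rcases eq_or_ne l 0 with rfl | hl
  · simp
  · exact (h l hl i).le

theorem linearIndependent (h : IsSeparated ξ v) (hξ : 0 ≤ ξ) : LinearIndependent ℝ v := by
  refine Fintype.linearIndependent_iff.2 fun l hl i => by_contra fun hli => ?_
  have hlt := h l (fun hl0 => hli (by simp [hl0])) i
  rw [hl, norm_zero] at hlt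
  exact hlt.not_ge (by positivity)

theorem abs_coeff_le (h : IsSeparated ξ v) (hξ : 0 < ξ) (hδ : 0 < δ) (l : ι → ℝ) {i : ι}
    (hv : δ ≤ ‖v i‖) : |l i| ≤ ‖∑ j, l j • v j‖ / (ξ * δ) := by
  rw [le_div_iff₀ (by positivity)]
  calc |l i| * (ξ * δ) ≤ ξ * (|l i| * ‖v i‖) := by
        rw [mul_left_comm]; gcongr
    _ = ξ * ‖l i • v i‖ := by rw [norm_smul, Real.norm_eq_abs]
    _ ≤ ‖∑ j, l j • v j‖ := h.mul_norm_smul_le l i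

end IsSeparated

namespace Module.Basis

theorem norm_equivFunL_le_of_isSeparated (b : Basis ι ℝ E) {ξ δ : ℝ} (h : IsSeparated ξ b)
    (hξ : 0 < ξ) (hδ : 0 < δ) (hb : ∀ i, δ ≤ ‖b i‖) :
    ‖b.equivFunL.toContinuousLinearMap‖ ≤ (ξ * δ)⁻¹ := by
  refine ContinuousLinearMap.opNorm_le_bound _ (by positivity) fun x =>
    (pi_norm_le_iff_of_nonneg (by positivity)).2 fun i => ?_
  have hcoeff := h.abs_coeff_le hξ hδ (b.repr x) (hb i)
  rw [b.sum_repr] at hcoeff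
  simpa [div_eq_inv_mul] using hcoeff

theorem existsUnique_continuousLinearMap_apply_eq (b : Basis ι ℝ E) (f : ι → F) :
    ∃! T : E →L[ℝ] F, ∀ i, T (b i) = f i :=
  ⟨b.constrL f, b.constrL_basis f, fun T hT =>
    ContinuousLinearMap.coe_injective <| b.ext fun i => by
      rw [ContinuousLinearMap.coe_coe, ContinuousLinearMap.coe_coe, hT i, b.constrL_basis]⟩

end Module.Basis

end

theorem gradient_bound_general {n : ℕ} (V : Type*) [NormedAddCommGroup V] [NormedSpace ℝ V]
    (ξ δ L : ℝ) (hξ : 0 < ξ) (hδ : 0 < δ) (hL : 0 < L)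
    (p : Fin n → EuclideanSpace ℝ (Fin n))
    (hsep : ∀ l : Fin n → ℝ, l ≠ 0 → ∀ i : Fin n,
      ξ * ‖l i • p i‖ < ‖∑ j : Fin n, l j • p j‖)
    (hp : ∀ i, δ < ‖p i‖)
    (f : Fin n → V) (hf : ∀ i, ‖f i‖ ≤ L) :
    LinearIndependent ℝ p ∧
      (∃! T : EuclideanSpace ℝ (Fin n) →L[ℝ] V, ∀ i, T (p i) = f i) ∧
      ∀ T : EuclideanSpace ℝ (Fin n) →L[ℝ] V, (∀ i, T (p i) = f i) →
        ‖T‖ ≤ L * n / (ξ * δ) := by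
  obtain ⟨b, rfl⟩ : ∃ b : Module.Basis (Fin n) ℝ (EuclideanSpace ℝ (Fin n)), ⇑b = p :=
    ⟨_, coe_basisOfLinearIndependentOfCardEqFinrank' p
      (IsSeparated.linearIndependent hsep hξ.le) (by simp)⟩
  refine ⟨b.linearIndependent, b.existsUnique_continuousLinearMap_apply_eq f, fun T hT => ?_⟩
  have hcoord := b.norm_equivFunL_le_of_isSeparated hsep hξ hδ fun i => (hp i).le
  calc ‖T‖ ≤ Fintype.card (Fin n) • ‖b.equivFunL.toContinuousLinearMap‖ * L :=
        b.opNorm_le hL.le fun i => hT i ▸ hf i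
    _ ≤ n • (ξ * δ)⁻¹ * L := by rw [Fintype.card_fin]; gcongr
    _ = L * n / (ξ * δ) := by rw [nsmul_eq_mul]; ring

/-- If `p₁,…,pₙ ∈ ℝⁿ` are `ξ`-separated with `‖pᵢ‖ > δ` and `f₁,…,fₙ ∈ V` satisfy `‖fᵢ‖ ≤ L`,
then the `pᵢ` are linearly independent and the unique linear map `T` with `T(pᵢ) = fᵢ`
satisfies `‖T‖ ≤ L n / (ξ δ)`. -/
theorem gradient_bound {n : ℕ} (V : Type*) [NormedAddCommGroup V] [NormedSpace ℝ V]
    [CompleteSpace V] (ξ δ L : ℝ) (hξ : 0 < ξ) (hδ : 0 < δ) (hL : 0 < L)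
    (p : Fin n → EuclideanSpace ℝ (Fin n))
    (hsep : ∀ l : Fin n → ℝ, l ≠ 0 → ∀ i : Fin n,
      ξ * ‖l i • p i‖ < ‖∑ j : Fin n, l j • p j‖)
    (hp : ∀ i, δ < ‖p i‖)
    (f : Fin n → V) (hf : ∀ i, ‖f i‖ ≤ L) :
    LinearIndependent ℝ p ∧
      (∃! T : EuclideanSpace ℝ (Fin n) →L[ℝ] V, ∀ i, T (p i) = f i) ∧
      ∀ T : EuclideanSpace ℝ (Fin n) →L[ℝ] V, (∀ i, T (p i) = f i) →
        ‖T‖ ≤ L * n / (ξ * δ) :=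
  gradient_bound_general V ξ δ L hξ hδ hL p hsep hp f hf
end

section
/- Let X be a compact metric space, ρ : X → [0,1] continuous, and suppose γₙ → γ_∞ in Γ (Hausdorff convergence of graphs in X × ℝ of 1-Lipschitz maps on compact subsets of ℝ, with a uniform bound on domains). Then ∫*_{γ_∞} ρ ≤ liminf_{n→∞} ∫*_{γₙ} ρ, i.e., the *-integral is lower semicontinuous along convergent sequences of curve fragments. -/
/-! Write `∫*_γ ρ = diam K - ∫_K (1 - ρ ∘ γ)`. Under Hausdorff convergence of the graphs every
point of `K_∞` is eventually close to a point of `K_n`, so the diameter is lower semicontinuous.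
For the integral term, the integrand `1_{K_n} (1 - ρ ∘ γ_n)` has pointwise limsup at most
`1_{K_∞} (1 - ρ ∘ γ_∞)`: a point off the closed set `K_∞` eventually leaves `K_n`, and for `t ∈ K_∞`
the point `(γ_n t, t)` is close to some `(γ_∞ s, s)` with `s ∈ K_∞`, so `γ_n t` is close to
`γ_∞ t` by continuity of `γ_∞`. Reverse Fatou, dominated by the indicator of `[-M, M]`, then makes
the integral term upper semicontinuous. -/

open Metric MeasureTheory Set Filter Topology

/-- The graph of a curve fragment `γ : K → X`, as a subset of `X × ℝ`. -/
def fragGraph {X : Type*} (γ : ℝ → X) (K : Set ℝ) : Set (X × ℝ) :=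
  (fun t => (γ t, t)) '' K

/-- The (simplified) *-integral of `ρ` over a curve fragment `γ : K → X`:
`(len γ − ms γ) + ∫_K ρ∘γ`. -/
noncomputable def starInt' {X : Type*} [MetricSpace X] [MeasurableSpace X]
    (γ : ℝ → X) (K : Set ℝ) (ρ : X → ℝ) : ℝ :=
  (sSup K - sInf K - (volume K).toReal) + ∫ t in K, ρ (γ t)

open scoped ENNReal NNReal

theorem Metric.diam_le_diam_add_of_forall_exists_dist_le {α : Type*} [PseudoMetricSpace α]
    {s t : Set α} {δ : ℝ} (ht : Bornology.IsBounded t) (hδ : 0 ≤ δ)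
    (h : ∀ x ∈ s, ∃ y ∈ t, dist x y ≤ δ) : diam s ≤ diam t + 2 * δ := by
  refine diam_le_of_forall_dist_le (by positivity) fun x hx y hy => ?_
  obtain ⟨x', hx', hxx'⟩ := h x hx
  obtain ⟨y', hy', hyy'⟩ := h y hy
  calc dist x y ≤ dist x x' + dist y y' + dist x' y' := dist_triangle4_right x y x' y'
    _ ≤ δ + δ + diam t := by gcongr; exact dist_le_diam_of_mem ht hx' hy'
    _ = diam t + 2 * δ := by ring

section FragmentConvergence

variable {X : Type*} [PseudoEMetricSpace X]

theorem exists_edist_lt_of_hausdorffEDist_fragGraph_lt {γ γ' : ℝ → X} {K K' : Set ℝ}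
    {r : ℝ≥0∞} (h : hausdorffEDist (fragGraph γ K) (fragGraph γ' K') < r) {t : ℝ} (ht : t ∈ K) :
    ∃ s ∈ K', edist (γ t) (γ' s) < r ∧ edist t s < r := by
  obtain ⟨_, ⟨s, hs, rfl⟩, hts⟩ := exists_edist_lt_of_hausdorffEDist_lt
    (show (γ t, t) ∈ fragGraph γ K from ⟨t, ht, rfl⟩) h
  rw [Prod.edist_eq, max_lt_iff] at hts
  exact ⟨s, hs, hts⟩

section

variable {ι : Type*} {l : Filter ι} {K : ι → Set ℝ} {K' : Set ℝ} {γ : ι → ℝ → X} {γ' : ℝ → X}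

theorem eventually_diam_le_diam_add
    (hconv : Tendsto (fun i => hausdorffEDist (fragGraph (γ i) (K i)) (fragGraph γ' K')) l (𝓝 0))
    (hK : ∀ i, Bornology.IsBounded (K i)) {ε : ℝ} (hε : 0 < ε) :
    ∀ᶠ i in l, diam K' ≤ diam (K i) + ε := by
  filter_upwards [hconv.eventually (gt_mem_nhds (ENNReal.ofReal_pos.2 (half_pos hε)))] with i hi
  rw [hausdorffEDist_comm] at hi
  refine (diam_le_diam_add_of_forall_exists_dist_le (hK i) (half_pos hε).le fun s hs => ?_).trans_eq
    (by ring)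
  obtain ⟨t, ht, -, hst⟩ := exists_edist_lt_of_hausdorffEDist_fragGraph_lt hi hs
  exact ⟨t, ht, (edist_lt_ofReal.1 hst).le⟩

theorem eventually_notMem_of_notMem
    (hconv : Tendsto (fun i => hausdorffEDist (fragGraph (γ i) (K i)) (fragGraph γ' K')) l (𝓝 0))
    (hK' : IsClosed K') {t : ℝ} (ht : t ∉ K') : ∀ᶠ i in l, t ∉ K i := by
  have hpos : 0 < infEDist t K' := infEDist_pos_iff_notMem_closure.2 (by rwa [hK'.closure_eq])
  filter_upwards [hconv.eventually (gt_mem_nhds hpos)] with i hi hti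
  obtain ⟨s, hs, -, hts⟩ := exists_edist_lt_of_hausdorffEDist_fragGraph_lt hi hti
  exact (infEDist_le_edist_of_mem hs).not_gt hts

theorem eventually_edist_lt_of_mem
    (hconv : Tendsto (fun i => hausdorffEDist (fragGraph (γ i) (K i)) (fragGraph γ' K')) l (𝓝 0))
    {t : ℝ} (hγ' : ContinuousWithinAt γ' K' t) {ε : ℝ≥0∞} (hε : 0 < ε) :
    ∀ᶠ i in l, t ∈ K i → edist (γ i t) (γ' t) < ε := by
  obtain ⟨η, hη, hγη⟩ := EMetric.continuousWithinAt_iff.1 hγ' (ε / 2) (by simpa using hε.ne')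
  have hr : 0 < min (ε / 2) η := lt_min (by simpa using hε.ne') hη
  filter_upwards [hconv.eventually (gt_mem_nhds hr)] with i hi hti
  obtain ⟨s, hs, hγs, hts⟩ := exists_edist_lt_of_hausdorffEDist_fragGraph_lt hi hti
  calc edist (γ i t) (γ' t) ≤ edist (γ i t) (γ' s) + edist (γ' s) (γ' t) := edist_triangle _ _ _
    _ < ε / 2 + ε / 2 := ENNReal.add_lt_add (hγs.trans_le (min_le_left _ _))
        (hγη hs (by rw [edist_comm]; exact hts.trans_le (min_le_right _ _)))
    _ = ε := ENNReal.add_halves ε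

theorem limsup_indicator_comp_le {f : X → ℝ≥0∞} (hf : Continuous f)
    (hconv : Tendsto (fun i => hausdorffEDist (fragGraph (γ i) (K i)) (fragGraph γ' K')) l (𝓝 0))
    (hK' : IsClosed K') (hγ' : ContinuousOn γ' K') (t : ℝ) :
    limsup (fun i => (K i).indicator (fun t => f (γ i t)) t) l ≤
      K'.indicator (fun t => f (γ' t)) t := by
  refine (limsup_le_iff).2 fun b hb => ?_
  by_cases ht : t ∈ K'
  · rw [indicator_of_mem ht] at hb
    obtain ⟨ε, hε, hball⟩ :=
      EMetric.mem_nhds_iff.1 (hf.continuousAt.eventually_lt continuousAt_const hb)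
    filter_upwards [eventually_edist_lt_of_mem hconv (hγ' t ht) hε] with i hi
    by_cases hti : t ∈ K i
    · rw [indicator_of_mem hti]
      exact hball (hi hti)
    · rw [indicator_of_notMem hti]
      exact zero_le.trans_lt hb
  · rw [indicator_of_notMem ht] at hb
    filter_upwards [eventually_notMem_of_notMem hconv hK' ht] with i hi
    rwa [indicator_of_notMem hi]

end

theorem limsup_setLIntegral_comp_le {μ : Measure ℝ} {K : ℕ → Set ℝ} {K' : Set ℝ}
    {γ : ℕ → ℝ → X} {γ' : ℝ → X}
    {f : X → ℝ≥0∞} (hf : Continuous f) {C : ℝ≥0} (hfC : ∀ x, f x ≤ C)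
    (hconv : Tendsto (fun n => hausdorffEDist (fragGraph (γ n) (K n)) (fragGraph γ' K'))
      atTop (𝓝 0))
    (hK : ∀ n, MeasurableSet (K n)) (hγ : ∀ n, ContinuousOn (γ n) (K n))
    {B : Set ℝ} (hKB : ∀ n, K n ⊆ B) (hB : μ B ≠ ∞) (hK' : IsClosed K')
    (hγ' : ContinuousOn γ' K') :
    limsup (fun n => ∫⁻ t in K n, f (γ n t) ∂μ) atTop ≤ ∫⁻ t in K', f (γ' t) ∂μ := by
  classical
  simp_rw [← lintegral_indicator (hK _), ← lintegral_indicator hK'.measurableSet]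
  have hmeas (n : ℕ) : Measurable ((K n).indicator fun t => f (γ n t)) := by
    rw [← piecewise_eq_indicator]
    exact (hf.comp_continuousOn (hγ n)).measurable_piecewise continuousOn_const (hK n)
  have hbound (n : ℕ) :
      (K n).indicator (fun t => f (γ n t)) ≤ B.indicator fun _ => (C : ℝ≥0∞) := fun t =>
    (indicator_le_indicator (hfC _)).trans
      (indicator_le_indicator_of_subset (hKB n) (fun _ => zero_le) t)
  have hfin : ∫⁻ t, B.indicator (fun _ => (C : ℝ≥0∞)) t ∂μ ≠ ∞ :=
    ne_top_of_le_ne_top (ENNReal.mul_ne_top ENNReal.coe_ne_top hB)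
      (lintegral_indicator_const_le _ _)
  calc _ ≤ ∫⁻ t, limsup (fun n => (K n).indicator (fun t => f (γ n t)) t) atTop ∂μ :=
        limsup_lintegral_le _ hmeas (fun n => ae_of_all _ (hbound n)) hfin
    _ ≤ _ := lintegral_mono (limsup_indicator_comp_le hf hconv hK' hγ')

end FragmentConvergence

theorem starInt'_eq_diam_sub_lintegral {X : Type*} [MetricSpace X] [MeasurableSpace X]
    {γ : ℝ → X} {K : Set ℝ} {ρ : X → ℝ} (hK : IsCompact K)
    (hργ : ContinuousOn (fun t => ρ (γ t)) K) (hρ : ∀ x, ρ x ≤ 1) :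
    starInt' γ K ρ = diam K - (∫⁻ t in K, ENNReal.ofReal (1 - ρ (γ t))).toReal := by
  have hint : ∫ t in K, (1 - ρ (γ t)) = volume.real K - ∫ t in K, ρ (γ t) := by
    rw [integral_sub (integrableOn_const (C := (1 : ℝ)) hK.measure_lt_top.ne)
      (hργ.integrableOn_compact hK), setIntegral_const, smul_eq_mul, mul_one]
  rw [← integral_eq_lintegral_of_nonneg_ae (ae_of_all _ fun t => sub_nonneg.2 (hρ _))
    ((continuousOn_const.sub hργ).aestronglyMeasurable hK.measurableSet), hint, starInt',
    Real.diam_eq hK.isBounded, Measure.real]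
  ring

theorem le_liminf_sub_toReal {ι : Type*} {l : Filter ι} [l.NeBot] {D : ℝ} {Dn : ι → ℝ}
    {I : ℝ≥0∞} {In : ι → ℝ≥0∞} (hD : ∀ ε > 0, ∀ᶠ i in l, D ≤ Dn i + ε) {C : ℝ}
    (hDC : ∀ i, Dn i ≤ C) (hI : limsup In l ≤ I) (hI_top : I ≠ ∞) :
    D - I.toReal ≤ liminf (fun i => Dn i - (In i).toReal) l := by
  have hbdd : IsCoboundedUnder (· ≥ ·) l fun i => Dn i - (In i).toReal :=
    isCoboundedUnder_ge_of_le l fun i => (sub_le_self _ ENNReal.toReal_nonneg).trans (hDC i)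
  refine le_of_forall_pos_le_add fun ε hε => sub_le_iff_le_add.1 (le_liminf_of_le hbdd ?_)
  have hε2 : 0 < ENNReal.ofReal (ε / 2) := ENNReal.ofReal_pos.2 (half_pos hε)
  filter_upwards [hD (ε / 2) (half_pos hε),
    eventually_lt_of_limsup_lt (hI.trans_lt (ENNReal.lt_add_right hI_top hε2.ne'))] with i hDi hIi
  have hIi' : (In i).toReal ≤ I.toReal + ε / 2 := by
    rw [← ENNReal.toReal_ofReal (half_pos hε).le, ← ENNReal.toReal_add hI_top ENNReal.ofReal_ne_top]
    exact ENNReal.toReal_mono (by finiteness) hIi.le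
  linarith

theorem starInt_lowerSemicontinuous_general {X : Type*} [MetricSpace X]
    [MeasurableSpace X]
    (ρ : X → ℝ) (hρc : Continuous ρ) (hρ : ∀ x, ρ x ∈ Set.Icc (0 : ℝ) 1)
    (K : ℕ → Set ℝ) (Kinf : Set ℝ) (γ : ℕ → ℝ → X) (γinf : ℝ → X)
    (hKc : ∀ n, IsCompact (K n))
    (hKinfc : IsCompact Kinf)
    (hLip : ∀ n, LipschitzOnWith 1 (γ n) (K n)) (hLipinf : LipschitzOnWith 1 γinf Kinf)
    (M : ℝ) (hM : ∀ n, K n ⊆ Set.Icc (-M) M)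
    (hconv : Tendsto
      (fun n => EMetric.hausdorffEdist (fragGraph (γ n) (K n)) (fragGraph γinf Kinf))
      atTop (nhds 0)) :
    starInt' γinf Kinf ρ ≤ Filter.liminf (fun n => starInt' (γ n) (K n) ρ) atTop := by
  set f : X → ℝ≥0∞ := fun x => ENNReal.ofReal (1 - ρ x)
  have hf1 (x : X) : f x ≤ (1 : ℝ≥0) := ENNReal.ofReal_le_one.2 (by linarith [(hρ x).1])
  have hstar {γ' : ℝ → X} {K' : Set ℝ} (hK : IsCompact K') (hγ : LipschitzOnWith 1 γ' K') :
      starInt' γ' K' ρ = diam K' - (∫⁻ t in K', f (γ' t)).toReal :=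
    starInt'_eq_diam_sub_lintegral hK (hρc.comp_continuousOn hγ.continuousOn) fun x => (hρ x).2
  rw [hstar hKinfc hLipinf, funext fun n => hstar (hKc n) (hLip n)]
  exact le_liminf_sub_toReal (fun ε => eventually_diam_le_diam_add hconv fun n => (hKc n).isBounded)
    (fun n => diam_mono (hM n) (isBounded_Icc _ _))
    (limsup_setLIntegral_comp_le (ENNReal.continuous_ofReal.comp (continuous_const.sub hρc)) hf1
      hconv (fun n => (hKc n).measurableSet) (fun n => (hLip n).continuousOn) hM
      (measure_Icc_lt_top (μ := volume)).ne hKinfc.isClosed hLipinf.continuousOn)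
    (setLIntegral_lt_top_of_le_nnreal hKinfc.measure_lt_top.ne ⟨1, fun t _ => hf1 _⟩).ne

/-- Lower semicontinuity of the *-integral: if curve fragments `γₙ` converge to `γ_∞` in the
Hausdorff distance of graphs (with uniformly bounded domains) in a compact metric space, and
`ρ : X → [0,1]` is continuous, then `∫*_{γ_∞} ρ ≤ liminf ∫*_{γₙ} ρ`. -/
theorem starInt_lowerSemicontinuous {X : Type*} [MetricSpace X] [CompactSpace X]
    [MeasurableSpace X] [BorelSpace X]
    (ρ : X → ℝ) (hρc : Continuous ρ) (hρ : ∀ x, ρ x ∈ Set.Icc (0 : ℝ) 1)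
    (K : ℕ → Set ℝ) (Kinf : Set ℝ) (γ : ℕ → ℝ → X) (γinf : ℝ → X)
    (hKc : ∀ n, IsCompact (K n)) (hKne : ∀ n, (K n).Nonempty)
    (hKinfc : IsCompact Kinf) (hKinfne : Kinf.Nonempty)
    (hLip : ∀ n, LipschitzOnWith 1 (γ n) (K n)) (hLipinf : LipschitzOnWith 1 γinf Kinf)
    (M : ℝ) (hM : ∀ n, K n ⊆ Set.Icc (-M) M)
    (hconv : Tendsto
      (fun n => EMetric.hausdorffEdist (fragGraph (γ n) (K n)) (fragGraph γinf Kinf))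
      atTop (nhds 0)) :
    starInt' γinf Kinf ρ ≤ Filter.liminf (fun n => starInt' (γ n) (K n) ρ) atTop :=
  starInt_lowerSemicontinuous_general ρ hρc hρ K Kinf γ γinf hKc hKinfc hLip hLipinf M hM hconv
end
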